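/- arXiv:math/0311378 — 9 statements merged into one kernel-verified Lean document; each statement's English description precedes it below -/
import Mathlib

section
/- Let F : 𝒟 ⥤ 𝒞, G : 𝒞 ⥤ 𝒟 and H : 𝒟 ⥤ ℰ be functors, and suppose there is an adjunction F ⊣ G (G is a right adjoint of F). If the composite G ⋙ H : 𝒞 ⥤ ℰ is naturally full and F is separable, then H is naturally full. -/
open CategoryTheory

/-- A functor `F : C ⥤ D` is *naturally full* if there is a family of maps
`𝒫 : (F.obj X ⟶ F.obj Y) → (X ⟶ Y)`, natural in `X` and `Y`, which is a section of
the action of `F` on morphisms. -/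
def NaturallyFull {C D : Type*} [Category C] [Category D] (F : C ⥤ D) : Prop :=
  ∃ P : ∀ (X Y : C), (F.obj X ⟶ F.obj Y) → (X ⟶ Y),
    (∀ (X' X Y Y' : C) (f : X' ⟶ X) (g : F.obj X ⟶ F.obj Y) (h : Y ⟶ Y'),
      P X' Y' (F.map f ≫ g ≫ F.map h) = f ≫ P X Y g ≫ h) ∧
    (∀ (X Y : C) (g : F.obj X ⟶ F.obj Y), F.map (P X Y g) = g)


/-- A functor `F : C ⥤ D` is *separable* if there is a family of maps
`𝒯 : (F.obj X ⟶ F.obj Y) → (X ⟶ Y)`, natural in `X` and `Y`, which is a retraction of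
the action of `F` on morphisms. -/
def SeparableFunctor {C D : Type*} [Category C] [Category D] (F : C ⥤ D) : Prop :=
  ∃ T : ∀ (X Y : C), (F.obj X ⟶ F.obj Y) → (X ⟶ Y),
    (∀ (X' X Y Y' : C) (f : X' ⟶ X) (g : F.obj X ⟶ F.obj Y) (h : Y ⟶ Y'),
      T X' Y' (F.map f ≫ g ≫ F.map h) = f ≫ T X Y g ≫ h) ∧
    (∀ (X Y : C) (f : X ⟶ Y), T X Y (F.map f) = f)

theorem naturallyFull_of_comp_adjoint_separable {C D E : Type*}
    [Category C] [Category D] [Category E]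
    (F : D ⥤ C) (G : C ⥤ D) (H : D ⥤ E) (adj : F ⊣ G)
    (hGH : NaturallyFull (G ⋙ H)) (hF : SeparableFunctor F) :
    NaturallyFull H := by
  obtain ⟨P, Pnat, Psec⟩ := hGH
  obtain ⟨T, Tnat, Tret⟩ := hF
  -- ν splits the unit, naturally
  let ν : ∀ X : D, G.obj (F.obj X) ⟶ X :=
    fun X => T (G.obj (F.obj X)) X (adj.counit.app (F.obj X))
  have hην : ∀ X : D, adj.unit.app X ≫ ν X = 𝟙 X := by
    intro X
    have h1 := Tnat X (G.obj (F.obj X)) X X (adj.unit.app X)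
      (adj.counit.app (F.obj X)) (𝟙 X)
    have h2 : F.map (adj.unit.app X) ≫ adj.counit.app (F.obj X) ≫ F.map (𝟙 X)
        = F.map (𝟙 X) := by
      simp
    rw [h2, Tret] at h1
    simpa using h1.symm
  have hνnat : ∀ (X Y : D) (f : X ⟶ Y),
      ν X ≫ f = G.map (F.map f) ≫ ν Y := by
    intro X Y f
    have h1 := Tnat (G.obj (F.obj X)) (G.obj (F.obj X)) X Y (𝟙 _)
      (adj.counit.app (F.obj X)) f
    have h2 := Tnat (G.obj (F.obj X)) (G.obj (F.obj Y)) Y Y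
      (G.map (F.map f)) (adj.counit.app (F.obj Y)) (𝟙 Y)
    have h3 : F.map (𝟙 (G.obj (F.obj X))) ≫ adj.counit.app (F.obj X) ≫ F.map f
        = F.map (G.map (F.map f)) ≫ adj.counit.app (F.obj Y) ≫ F.map (𝟙 Y) := by
      simp [adj.counit.naturality]
    have := h1.symm.trans ((congrArg _ h3).trans h2)
    simpa using this
  refine ⟨fun X Y g => adj.unit.app X ≫
      G.map (P (F.obj X) (F.obj Y) (H.map (ν X) ≫ g ≫ H.map (adj.unit.app Y)))
      ≫ ν Y, ?_, ?_⟩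
  · intro X' X Y Y' f g h
    dsimp only
    have e1 : ν X' ≫ f = G.map (F.map f) ≫ ν X := hνnat X' X f
    have e2 : h ≫ adj.unit.app Y' = adj.unit.app Y ≫ G.map (F.map h) := by
      simpa using adj.unit.naturality h
    have key : H.map (ν X') ≫ (H.map f ≫ g ≫ H.map h) ≫ H.map (adj.unit.app Y')
        = (G ⋙ H).map (F.map f) ≫ (H.map (ν X) ≫ g ≫ H.map (adj.unit.app Y))
          ≫ (G ⋙ H).map (F.map h) := by
      rw [show H.map (ν X') ≫ (H.map f ≫ g ≫ H.map h) ≫ H.map (adj.unit.app Y')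
          = H.map (ν X' ≫ f) ≫ g ≫ H.map (h ≫ adj.unit.app Y') by simp, e1, e2]
      simp only [Functor.map_comp, Functor.comp_map, Category.assoc]
    rw [key, Pnat]
    simp only [Functor.map_comp, Category.assoc]
    rw [← hνnat Y Y' h]
    rw [← Category.assoc (adj.unit.app X'),
      show adj.unit.app X' ≫ G.map (F.map f) = f ≫ adj.unit.app X from by
        simpa using adj.unit.naturality f]
    simp
  · intro X Y g
    dsimp only
    simp only [Functor.map_comp]
    have hsec := Psec (F.obj X) (F.obj Y) (H.map (ν X) ≫ g ≫ H.map (adj.unit.app Y))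
    simp only [Functor.comp_map] at hsec
    rw [hsec]
    have hX : ∀ {Z : E} (k : H.obj X ⟶ Z),
        H.map (adj.unit.app X) ≫ H.map (ν X) ≫ k = k := by
      intro Z k
      rw [← Category.assoc, ← H.map_comp, hην]
      simp
    simp only [Category.assoc, hX]
    rw [← H.map_comp, hην]
    simp
end

section
/- Let F : 𝒟 ⥤ 𝒞, G : 𝒞 ⥤ 𝒟 and H : 𝒟 ⥤ ℰ be functors, and suppose there is an adjunction G ⊣ F (G is a left adjoint of F). If the composite G ⋙ H : 𝒞 ⥤ ℰ is naturally full and F is separable, then H is naturally full. -/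
open CategoryTheory

theorem naturallyFull_of_comp_left_adjoint_separable {C D E : Type*}
    [Category C] [Category D] [Category E]
    (F : D ⥤ C) (G : C ⥤ D) (H : D ⥤ E) (adj : G ⊣ F)
    (hGH : NaturallyFull (G ⋙ H)) (hF : SeparableFunctor F) :
    NaturallyFull H := by
  obtain ⟨P, Pnat, Psec⟩ := hGH
  obtain ⟨T, Tnat, Tret⟩ := hF
  -- splitting of the counit, from separability (Rafael's theorem direction)
  set ν : ∀ X : D, X ⟶ G.obj (F.obj X) :=
    fun X => T X (G.obj (F.obj X)) (adj.unit.app (F.obj X)) with hν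
  have hνε : ∀ X : D, ν X ≫ adj.counit.app X = 𝟙 X := by
    intro X
    have := Tnat X X (G.obj (F.obj X)) X (𝟙 X) (adj.unit.app (F.obj X)) (adj.counit.app X)
    simp only [F.map_id, Category.id_comp] at this
    rw [hν]
    have h2 : adj.unit.app (F.obj X) ≫ F.map (adj.counit.app X)
        = F.map (𝟙 X) := by
      simp
    calc T X (G.obj (F.obj X)) (adj.unit.app (F.obj X)) ≫ adj.counit.app X
        = T X X (adj.unit.app (F.obj X) ≫ F.map (adj.counit.app X)) := this.symm
      _ = T X X (F.map (𝟙 X)) := by rw [h2]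
      _ = 𝟙 X := Tret X X (𝟙 X)
  have hνnat : ∀ {X' X : D} (f : X' ⟶ X),
      ν X' ≫ G.map (F.map f) = f ≫ ν X := by
    intro X' X f
    have h1 := Tnat X' X' (G.obj (F.obj X')) (G.obj (F.obj X)) (𝟙 X')
      (adj.unit.app (F.obj X')) (G.map (F.map f))
    simp only [F.map_id, Category.id_comp] at h1
    have h2 : adj.unit.app (F.obj X') ≫ F.map (G.map (F.map f))
        = F.map f ≫ adj.unit.app (F.obj X) := by
      simpa using adj.unit.naturality (F.map f)
    have h3 := Tnat X' X (G.obj (F.obj X)) (G.obj (F.obj X)) f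
      (adj.unit.app (F.obj X)) (𝟙 _)
    simp only [F.map_id, Category.comp_id] at h3
    rw [hν]
    calc T X' (G.obj (F.obj X')) (adj.unit.app (F.obj X')) ≫ G.map (F.map f)
        = T X' (G.obj (F.obj X)) (adj.unit.app (F.obj X') ≫ F.map (G.map (F.map f))) :=
          h1.symm
      _ = T X' (G.obj (F.obj X)) (F.map f ≫ adj.unit.app (F.obj X)) := by rw [h2]
      _ = f ≫ T X (G.obj (F.obj X)) (adj.unit.app (F.obj X)) := h3
  refine ⟨fun X Y g => ν X ≫ G.map (P (F.obj X) (F.obj Y)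
      (H.map (adj.counit.app X) ≫ g ≫ H.map (ν Y))) ≫ adj.counit.app Y, ?_, ?_⟩
  · intro X' X Y Y' f g h
    have key : H.map (adj.counit.app X') ≫ (H.map f ≫ g ≫ H.map h) ≫ H.map (ν Y')
        = (G ⋙ H).map (F.map f) ≫
          (H.map (adj.counit.app X) ≫ g ≫ H.map (ν Y)) ≫ (G ⋙ H).map (F.map h) := by
      have e1 : adj.counit.app X' ≫ f = G.map (F.map f) ≫ adj.counit.app X := by
        simpa using (adj.counit.naturality f).symm
      have e2 : h ≫ ν Y' = ν Y ≫ G.map (F.map h) := (hνnat h).symm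
      calc H.map (adj.counit.app X') ≫ (H.map f ≫ g ≫ H.map h) ≫ H.map (ν Y')
          = H.map (adj.counit.app X' ≫ f) ≫ g ≫ H.map (h ≫ ν Y') := by
            simp only [H.map_comp, Category.assoc]
        _ = H.map (G.map (F.map f) ≫ adj.counit.app X) ≫ g ≫
              H.map (ν Y ≫ G.map (F.map h)) := by rw [e1, e2]
        _ = (G ⋙ H).map (F.map f) ≫ (H.map (adj.counit.app X) ≫ g ≫ H.map (ν Y)) ≫
              (G ⋙ H).map (F.map h) := by
            simp only [H.map_comp, Functor.comp_map, Category.assoc]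
    dsimp only
    rw [key, Pnat]
    simp only [G.map_comp, Category.assoc]
    rw [← Category.assoc (ν X'), hνnat f]
    have e3 : G.map (F.map h) ≫ adj.counit.app Y' = adj.counit.app Y ≫ h :=
      adj.counit.naturality h
    rw [e3]
    simp [Category.assoc]
  · intro X Y g
    simp only [H.map_comp]
    have := Psec (F.obj X) (F.obj Y) (H.map (adj.counit.app X) ≫ g ≫ H.map (ν Y))
    simp only [Functor.comp_map] at this
    rw [this]
    simp only [Category.assoc]
    rw [← H.map_comp_assoc, hνε, H.map_id, Category.id_comp, ← H.map_comp,
      hνε, H.map_id, Category.comp_id]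
end

section
/- Let F : 𝒞 ⥤ 𝒟 be a functor with right adjoint G : 𝒟 ⥤ 𝒞, with unit η : 𝟭 𝒞 ⟶ F ⋙ G and counit ε : G ⋙ F ⟶ 𝟭 𝒟. Then F is naturally full if and only if there exists a natural transformation ν : F ⋙ G ⟶ 𝟭 𝒞 such that ν_C ≫ η_C = 𝟙 (G.obj (F.obj C)) for every object C of 𝒞. Moreover, if F is naturally full, then for every object C of 𝒞 the counit component ε_{F.obj C} : F.obj (G.obj (F.obj C)) ⟶ F.obj C is an isomorphism with inverse F.map η_C. -/
open CategoryTheory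

/-!
A natural section `𝒫` of `F.map` yields the retraction `ν_X := 𝒫(ε_{F X})` of the unit, and
conversely a natural retraction `ν` of the unit yields `𝒫(g) := η_X ≫ G g ≫ ν_Y`. The triangle
identity `F η_X ≫ ε_{F X} = 𝟙` forces `F r = ε_{F X}` for every retraction `r` of `η_X`; this gives
`F 𝒫(g) = g`, and makes `F η_X` a two-sided inverse of `ε_{F X}`.
-/

namespace CategoryTheory.Adjunction

variable {C D : Type*} [Category C] [Category D] {F : C ⥤ D} {G : D ⥤ C} (adj : F ⊣ G)

lemma map_eq_counit_app_of_comp_unit_app_eq_id {X : C} {r : G.obj (F.obj X) ⟶ X}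
    (hr : r ≫ adj.unit.app X = 𝟙 _) : F.map r = adj.counit.app (F.obj X) :=
  calc F.map r = F.map r ≫ F.map (adj.unit.app X) ≫ adj.counit.app (F.obj X) := by simp
    _ = adj.counit.app (F.obj X) := by rw [← F.map_comp_assoc, hr, F.map_id, Category.id_comp]

lemma counit_app_comp_map_unit_app_of_comp_unit_app_eq_id {X : C} {r : G.obj (F.obj X) ⟶ X}
    (hr : r ≫ adj.unit.app X = 𝟙 _) :
    adj.counit.app (F.obj X) ≫ F.map (adj.unit.app X) = 𝟙 _ := by
  rw [← adj.map_eq_counit_app_of_comp_unit_app_eq_id hr, ← F.map_comp, hr, F.map_id]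
  rfl

lemma exists_retraction_unit_of_naturallyFull (hF : NaturallyFull F) :
    ∃ ν : F ⋙ G ⟶ 𝟭 C, ∀ X : C, ν.app X ≫ adj.unit.app X = 𝟙 _ := by
  obtain ⟨P, hnat, hsec⟩ := hF
  have hpre : ∀ {X' X Y : C} (f : X' ⟶ X) (g : F.obj X ⟶ F.obj Y),
      P X' Y (F.map f ≫ g) = f ≫ P X Y g := fun f g => by
    simpa using hnat _ _ _ _ f g (𝟙 _)
  have hpost : ∀ {X Y Y' : C} (g : F.obj X ⟶ F.obj Y) (h : Y ⟶ Y'),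
      P X Y' (g ≫ F.map h) = P X Y g ≫ h := fun g h => by
    simpa using hnat _ _ _ _ (𝟙 _) g h
  refine ⟨{ app := fun X => P _ _ (adj.counit.app (F.obj X)), naturality := ?_ }, fun X => ?_⟩
  · intro X Y f
    dsimp
    rw [← hpre, ← hpost, adj.counit_naturality]
  · dsimp
    rw [← adj.unit_naturality, hsec, adj.right_triangle_components]

lemma naturallyFull_of_retraction_unit (ν : F ⋙ G ⟶ 𝟭 C)
    (hν : ∀ X : C, ν.app X ≫ adj.unit.app X = 𝟙 _) : NaturallyFull F := by
  refine ⟨fun X Y g => adj.unit.app X ≫ G.map g ≫ ν.app Y, fun X' X Y Y' f g h => ?_,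
    fun X Y g => ?_⟩
  · have hν_nat := ν.naturality h
    dsimp at hν_nat
    simp only [G.map_comp, Category.assoc, hν_nat, adj.unit_naturality_assoc]
  · rw [F.map_comp, F.map_comp, adj.map_eq_counit_app_of_comp_unit_app_eq_id (hν Y)]
    dsimp only [Functor.id_obj]
    rw [adj.counit_naturality, adj.left_triangle_components_assoc]

end CategoryTheory.Adjunction

theorem naturallyFull_left_adjoint_iff {C D : Type*} [Category C] [Category D]
    (F : C ⥤ D) (G : D ⥤ C) (adj : F ⊣ G) :
    (NaturallyFull F ↔ ∃ ν : F ⋙ G ⟶ 𝟭 C,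
        ∀ X : C, ν.app X ≫ adj.unit.app X = 𝟙 (G.obj (F.obj X))) ∧
    (NaturallyFull F → ∀ X : C,
        adj.counit.app (F.obj X) ≫ F.map (adj.unit.app X) = 𝟙 (F.obj (G.obj (F.obj X))) ∧
        F.map (adj.unit.app X) ≫ adj.counit.app (F.obj X) = 𝟙 (F.obj X)) := by
  refine ⟨⟨adj.exists_retraction_unit_of_naturallyFull,
    fun ⟨ν, hν⟩ => adj.naturallyFull_of_retraction_unit ν hν⟩, fun hF X => ?_⟩
  obtain ⟨ν, hν⟩ := adj.exists_retraction_unit_of_naturallyFull hF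
  exact ⟨adj.counit_app_comp_map_unit_app_of_comp_unit_app_eq_id (hν X),
    adj.left_triangle_components X⟩
end

section
/- Let F : 𝒞 ⥤ 𝒟 be a functor with right adjoint G : 𝒟 ⥤ 𝒞, with unit η : 𝟭 𝒞 ⟶ F ⋙ G and counit ε : G ⋙ F ⟶ 𝟭 𝒟. Then G is naturally full if and only if there exists a natural transformation ξ : 𝟭 𝒟 ⟶ G ⋙ F such that ε_D ≫ ξ_D = 𝟙 (F.obj (G.obj D)) for every object D of 𝒟. Moreover, if G is naturally full, then for every object D of 𝒟 the morphism G.map ε_D : G.obj (F.obj (G.obj D)) ⟶ G.obj D is an isomorphism with inverse η_{G.obj D}. -/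
open CategoryTheory

theorem naturallyFull_right_adjoint_iff {C D : Type*} [Category C] [Category D]
    (F : C ⥤ D) (G : D ⥤ C) (adj : F ⊣ G) :
    (NaturallyFull G ↔ ∃ ξ : 𝟭 D ⟶ G ⋙ F,
        ∀ Y : D, adj.counit.app Y ≫ ξ.app Y = 𝟙 (F.obj (G.obj Y))) ∧
    (NaturallyFull G → ∀ Y : D,
        G.map (adj.counit.app Y) ≫ adj.unit.app (G.obj Y) = 𝟙 (G.obj (F.obj (G.obj Y))) ∧
        adj.unit.app (G.obj Y) ≫ G.map (adj.counit.app Y) = 𝟙 (G.obj Y)) := by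
  -- Key fact used twice: if `G` is naturally full with section `P`, then
  -- `P (G.map ε_Y ≫ η_{G Y}) = 𝟙`.
  have key : ∀ P : ∀ (X Y : D), (G.obj X ⟶ G.obj Y) → (X ⟶ Y),
      (∀ (X' X Y Y' : D) (f : X' ⟶ X) (g : G.obj X ⟶ G.obj Y) (h : Y ⟶ Y'),
        P X' Y' (G.map f ≫ g ≫ G.map h) = f ≫ P X Y g ≫ h) →
      (∀ (X Y : D) (g : G.obj X ⟶ G.obj Y), G.map (P X Y g) = g) →
      ∀ Y : D, P (F.obj (G.obj Y)) (F.obj (G.obj Y))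
          (G.map (adj.counit.app Y) ≫ adj.unit.app (G.obj Y)) = 𝟙 (F.obj (G.obj Y)) := by
    intro P hnat hsec Y
    apply (adj.homEquiv _ _).injective
    rw [adj.homEquiv_unit, adj.homEquiv_unit, hsec]
    simp
  constructor
  · constructor
    · rintro ⟨P, hnat, hsec⟩
      refine ⟨⟨fun Y => P Y (F.obj (G.obj Y)) (adj.unit.app (G.obj Y)), ?_⟩, ?_⟩
      · intro Y Y' f
        dsimp
        calc f ≫ P Y' (F.obj (G.obj Y')) (adj.unit.app (G.obj Y'))
            = f ≫ P Y' (F.obj (G.obj Y')) (adj.unit.app (G.obj Y')) ≫ 𝟙 _ := by simp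
          _ = P Y (F.obj (G.obj Y'))
                (G.map f ≫ adj.unit.app (G.obj Y') ≫ G.map (𝟙 _)) := by
              rw [hnat]
          _ = P Y (F.obj (G.obj Y'))
                (G.map (𝟙 Y) ≫ adj.unit.app (G.obj Y) ≫ G.map (F.map (G.map f))) := by
              congr 1
              simp
          _ = 𝟙 Y ≫ P Y (F.obj (G.obj Y)) (adj.unit.app (G.obj Y)) ≫ F.map (G.map f) := by
              rw [hnat]
          _ = P Y (F.obj (G.obj Y)) (adj.unit.app (G.obj Y)) ≫ F.map (G.map f) := by simp
      · intro Y
        have := hnat (F.obj (G.obj Y)) Y (F.obj (G.obj Y)) (F.obj (G.obj Y))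
          (adj.counit.app Y) (adj.unit.app (G.obj Y)) (𝟙 _)
        simp only [G.map_id, Category.comp_id] at this
        rw [← this, key P hnat hsec Y]
    · rintro ⟨ξ, hξ⟩
      have hGξ : ∀ Y : D, G.map (ξ.app Y) = adj.unit.app (G.obj Y) := by
        intro Y
        have h1 : G.map (adj.counit.app Y) ≫ G.map (ξ.app Y) = 𝟙 _ := by
          rw [← G.map_comp, hξ]; simp
        calc G.map (ξ.app Y)
            = (adj.unit.app (G.obj Y) ≫ G.map (adj.counit.app Y)) ≫ G.map (ξ.app Y) := by
              rw [adj.right_triangle_components]; simp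
          _ = adj.unit.app (G.obj Y) ≫ 𝟙 _ := by rw [Category.assoc, h1]; simp
          _ = adj.unit.app (G.obj Y) := by simp
      refine ⟨fun X Y g => ξ.app X ≫ F.map g ≫ adj.counit.app Y, ?_, ?_⟩
      · intro X' X Y Y' f g h
        have hξf : f ≫ ξ.app X = ξ.app X' ≫ F.map (G.map f) := by simpa using ξ.naturality f
        have hεh : F.map (G.map h) ≫ adj.counit.app Y' = adj.counit.app Y ≫ h :=
          adj.counit.naturality h
        simp only [F.map_comp, Category.assoc, hεh]
        rw [← Category.assoc, ← hξf, Category.assoc]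
      · intro X Y g
        simp only [G.map_comp, hGξ]
        have := adj.unit.naturality g
        dsimp at this
        rw [← Category.assoc, ← this, Category.assoc, adj.right_triangle_components]
        simp
  · rintro ⟨P, hnat, hsec⟩ Y
    constructor
    · rw [← hsec (F.obj (G.obj Y)) (F.obj (G.obj Y))
        (G.map (adj.counit.app Y) ≫ adj.unit.app (G.obj Y)), key P hnat hsec Y, G.map_id]
    · exact adj.right_triangle_components Y
end

section
/- Let F : 𝒞 ⥤ 𝒟 be a Frobenius functor with two-sided adjoint G : 𝒟 ⥤ 𝒞; let η : 𝟭 𝒞 ⟶ F ⋙ G and ε : G ⋙ F ⟶ 𝟭 𝒟 be the unit and counit of an adjunction F ⊣ G, and let χ : 𝟭 𝒟 ⟶ G ⋙ F and μ : F ⋙ G ⟶ 𝟭 𝒞 be the unit and counit of an adjunction G ⊣ F. Then the following are equivalent: (1) F is naturally full; (2) there exists a natural transformation α : G ⟶ G such that α_{F.obj C} ≫ μ_C ≫ η_C = 𝟙 (G.obj (F.obj C)) for all C; (3) there exists a natural transformation β : F ⟶ F such that G.map β_C ≫ μ_C ≫ η_C = 𝟙 (G.obj (F.obj C)) for all C;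 (4) there exists a natural transformation α' : G ⟶ G such that μ_C ≫ η_C ≫ α'_{F.obj C} = 𝟙 (G.obj (F.obj C)) for all C; (5) there exists a natural transformation β' : F ⟶ F such that μ_C ≫ η_C ≫ G.map β'_C = 𝟙 (G.obj (F.obj C)) for all C. Moreover, in this case μ_C ≫ η_C : G.obj (F.obj C) ⟶ G.obj (F.obj C) is an isomorphism for every object C of 𝒞. -/
open CategoryTheory

/-!
Under `F ⊣ G` the action of `F` on morphisms `(X ⟶ Y) → (F X ⟶ F Y) ≃ (X ⟶ G F Y)` is
post-composition with the unit `η`, so by Yoneda a natural section of it is the same as a natural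
section `e : G F ⟶ 𝟭` of `η`; under `G ⊣ F` it is likewise a natural retraction `m : 𝟭 ⟶ G F` of
the counit `μ`. Whiskering along the two adjunctions gives bijections `(G F ⟶ 𝟭) ≃ (G ⟶ G)`,
`(G F ⟶ 𝟭) ≃ (F ⟶ F)`, `(G ⟶ G) ≃ (𝟭 ⟶ G F)` and `(F ⟶ F) ≃ (𝟭 ⟶ G F)`, under which the conditions
`e ≫ η = 𝟙` and `μ ≫ m = 𝟙` become the four conditions of the theorem. When they hold, `μ ≫ η`
has the left inverse `α_F` and the right inverse `α'_F`.
-/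

section

variable {C D : Type*} [Category C] [Category D] {F : C ⥤ D} {G : D ⥤ C}

lemma naturallyFull_iff_separately_natural :
    NaturallyFull F ↔ ∃ P : ∀ X Y : C, (F.obj X ⟶ F.obj Y) → (X ⟶ Y),
      (∀ {X' X Y : C} (f : X' ⟶ X) (g : F.obj X ⟶ F.obj Y), P X' Y (F.map f ≫ g) = f ≫ P X Y g) ∧
      (∀ {X Y Y' : C} (g : F.obj X ⟶ F.obj Y) (h : Y ⟶ Y'), P X Y' (g ≫ F.map h) = P X Y g ≫ h) ∧
      ∀ X Y (g : F.obj X ⟶ F.obj Y), F.map (P X Y g) = g := by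
  constructor
  · rintro ⟨P, hP, hF⟩
    refine ⟨P, fun f g => ?_, fun g h => ?_, hF⟩
    · simpa using hP _ _ _ _ f g (𝟙 _)
    · simpa using hP _ _ _ _ (𝟙 _) g h
  · rintro ⟨P, hl, hr, hF⟩
    exact ⟨P, fun _ _ _ _ f g h => by rw [hl, hr], hF⟩

lemma naturallyFull_iff_exists_section_unit (adj : F ⊣ G) :
    NaturallyFull F ↔ ∃ e : F ⋙ G ⟶ 𝟭 C, ∀ X, e.app X ≫ adj.unit.app X = 𝟙 _ := by
  rw [naturallyFull_iff_separately_natural]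
  constructor
  · rintro ⟨P, hl, hr, hF⟩
    refine ⟨{ app X := P _ _ (adj.counit.app (F.obj X)), naturality X Y f := ?_ }, fun X => ?_⟩
    · dsimp
      rw [← hl, adj.counit_naturality, hr]
    · simp [← adj.unit_naturality, hF]
  · rintro ⟨e, he⟩
    have map_e (X : C) : F.map (e.app X) = adj.counit.app (F.obj X) :=
      (adj.homEquiv _ _).injective <| by
        simpa [Adjunction.homEquiv_unit] using (adj.unit_naturality (e.app X)).trans (he X)
    refine ⟨fun X Y g => adj.homEquiv X (F.obj Y) g ≫ e.app Y, fun f g => ?_, fun g h => ?_,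
      fun X Y g => ?_⟩
    · dsimp only
      rw [adj.homEquiv_naturality_left, Category.assoc]
    · dsimp only
      rw [adj.homEquiv_naturality_right, Category.assoc, Category.assoc]
      exact congrArg _ (e.naturality h)
    · rw [F.map_comp, map_e, ← adj.homEquiv_counit, Equiv.symm_apply_apply]

lemma naturallyFull_iff_exists_retraction_counit (adj : G ⊣ F) :
    NaturallyFull F ↔ ∃ m : 𝟭 C ⟶ F ⋙ G, ∀ X, adj.counit.app X ≫ m.app X = 𝟙 _ := by
  rw [naturallyFull_iff_separately_natural]
  constructor
  · rintro ⟨P, hl, hr, hF⟩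
    refine ⟨{ app X := P _ _ (adj.unit.app (F.obj X)), naturality X Y f := ?_ }, fun X => ?_⟩
    · dsimp
      rw [← hl, ← hr, adj.unit_naturality]
    · simp [← adj.counit_naturality, hF]
  · rintro ⟨m, hm⟩
    have map_m (X : C) : F.map (m.app X) = adj.unit.app (F.obj X) :=
      (adj.homEquiv _ _).symm.injective <| by
        simpa [Adjunction.homEquiv_counit] using (adj.counit_naturality (m.app X)).trans (hm X)
    refine ⟨fun X Y g => m.app X ≫ (adj.homEquiv (F.obj X) Y).symm g, fun f g => ?_,
      fun g h => ?_, fun X Y g => ?_⟩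
    · dsimp only
      rw [adj.homEquiv_naturality_left_symm, ← Category.assoc, ← Category.assoc]
      exact congrArg (· ≫ _) (m.naturality f).symm
    · dsimp only
      rw [adj.homEquiv_naturality_right_symm, Category.assoc]
    · rw [F.map_comp, map_m, ← adj.homEquiv_unit, Equiv.apply_symm_apply]

namespace CategoryTheory.Adjunction

lemma exists_section_iff_exists_app_obj_comp_counit (adj : G ⊣ F)
    (φ : ∀ X : C, X ⟶ G.obj (F.obj X)) :
    (∃ e : F ⋙ G ⟶ 𝟭 C, ∀ X, e.app X ≫ φ X = 𝟙 _) ↔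
      ∃ α : G ⟶ G, ∀ X, α.app (F.obj X) ≫ adj.counit.app X ≫ φ X = 𝟙 _ := by
  refine ((adj.whiskerLeft C).homEquiv G (𝟭 C)).exists_congr_left.trans (exists_congr fun α => ?_)
  rw [homEquiv_counit]
  simp

lemma exists_section_iff_exists_map_app_comp_counit (adj : G ⊣ F)
    (φ : ∀ X : C, X ⟶ G.obj (F.obj X)) :
    (∃ e : F ⋙ G ⟶ 𝟭 C, ∀ X, e.app X ≫ φ X = 𝟙 _) ↔
      ∃ β : F ⟶ F, ∀ X, G.map (β.app X) ≫ adj.counit.app X ≫ φ X = 𝟙 _ := by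
  refine ((adj.whiskerRight C).homEquiv F (𝟭 C)).exists_congr_left.trans (exists_congr fun β => ?_)
  rw [homEquiv_counit]
  simp

lemma exists_retraction_iff_exists_unit_comp_app_obj (adj : F ⊣ G)
    (ψ : ∀ X : C, G.obj (F.obj X) ⟶ X) :
    (∃ m : 𝟭 C ⟶ F ⋙ G, ∀ X, ψ X ≫ m.app X = 𝟙 _) ↔
      ∃ α' : G ⟶ G, ∀ X, ψ X ≫ adj.unit.app X ≫ α'.app (F.obj X) = 𝟙 _ := by
  refine ((adj.whiskerLeft C).homEquiv (𝟭 C) G).symm.exists_congr_left.trans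
    (exists_congr fun α' => ?_)
  rw [Equiv.symm_symm, homEquiv_unit]
  simp

lemma exists_retraction_iff_exists_unit_comp_map_app (adj : F ⊣ G)
    (ψ : ∀ X : C, G.obj (F.obj X) ⟶ X) :
    (∃ m : 𝟭 C ⟶ F ⋙ G, ∀ X, ψ X ≫ m.app X = 𝟙 _) ↔
      ∃ β' : F ⟶ F, ∀ X, ψ X ≫ adj.unit.app X ≫ G.map (β'.app X) = 𝟙 _ := by
  refine ((adj.whiskerRight C).homEquiv (𝟭 C) F).symm.exists_congr_left.trans
    (exists_congr fun β' => ?_)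
  rw [Equiv.symm_symm, homEquiv_unit]
  simp

end CategoryTheory.Adjunction

end

theorem frobenius_naturallyFull_tfae {C D : Type*} [Category C] [Category D]
    (F : C ⥤ D) (G : D ⥤ C) (adj₁ : F ⊣ G) (adj₂ : G ⊣ F) :
    (NaturallyFull F ↔ ∃ α : G ⟶ G, ∀ X : C,
        α.app (F.obj X) ≫ adj₂.counit.app X ≫ adj₁.unit.app X = 𝟙 (G.obj (F.obj X))) ∧
    (NaturallyFull F ↔ ∃ β : F ⟶ F, ∀ X : C,
        G.map (β.app X) ≫ adj₂.counit.app X ≫ adj₁.unit.app X = 𝟙 (G.obj (F.obj X))) ∧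
    (NaturallyFull F ↔ ∃ α' : G ⟶ G, ∀ X : C,
        adj₂.counit.app X ≫ adj₁.unit.app X ≫ α'.app (F.obj X) = 𝟙 (G.obj (F.obj X))) ∧
    (NaturallyFull F ↔ ∃ β' : F ⟶ F, ∀ X : C,
        adj₂.counit.app X ≫ adj₁.unit.app X ≫ G.map (β'.app X) = 𝟙 (G.obj (F.obj X))) ∧
    (NaturallyFull F → ∀ X : C, IsIso (adj₂.counit.app X ≫ adj₁.unit.app X)) := by
  have iff_α := (naturallyFull_iff_exists_section_unit adj₁).trans
    (adj₂.exists_section_iff_exists_app_obj_comp_counit adj₁.unit.app)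
  have iff_β := (naturallyFull_iff_exists_section_unit adj₁).trans
    (adj₂.exists_section_iff_exists_map_app_comp_counit adj₁.unit.app)
  have iff_α' := (naturallyFull_iff_exists_retraction_counit adj₂).trans
    (adj₁.exists_retraction_iff_exists_unit_comp_app_obj adj₂.counit.app)
  have iff_β' := (naturallyFull_iff_exists_retraction_counit adj₂).trans
    (adj₁.exists_retraction_iff_exists_unit_comp_map_app adj₂.counit.app)
  refine ⟨iff_α, iff_β, iff_α', iff_β', fun hF X => ?_⟩
  obtain ⟨α, hα⟩ := iff_α.mp hF
  obtain ⟨α', hα'⟩ := iff_α'.mp hF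
  have : IsSplitEpi (adj₂.counit.app X ≫ adj₁.unit.app X) :=
    .mk' ⟨α.app (F.obj X), by simpa using hα X⟩
  have : IsSplitMono (adj₂.counit.app X ≫ adj₁.unit.app X) :=
    .mk' ⟨α'.app (F.obj X), by simpa using hα' X⟩
  exact isIso_of_mono_of_isSplitEpi _
end

section
/- A functor F : 𝒞 ⥤ 𝒟 between categories is fully faithful (i.e. full and faithful) if and only if F is both separable and naturally full. -/
open CategoryTheory

theorem fullyFaithful_iff_separable_and_naturallyFull {C D : Type*} [Category C] [Category D]
    (F : C ⥤ D) :
    (F.Full ∧ F.Faithful) ↔ (SeparableFunctor F ∧ NaturallyFull F) := by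
  constructor
  · rintro ⟨hFull, hFaith⟩
    have key : ∃ T : ∀ (X Y : C), (F.obj X ⟶ F.obj Y) → (X ⟶ Y),
        (∀ (X' X Y Y' : C) (f : X' ⟶ X) (g : F.obj X ⟶ F.obj Y) (h : Y ⟶ Y'),
          T X' Y' (F.map f ≫ g ≫ F.map h) = f ≫ T X Y g ≫ h) ∧
        (∀ (X Y : C) (f : X ⟶ Y), T X Y (F.map f) = f) ∧
        (∀ (X Y : C) (g : F.obj X ⟶ F.obj Y), F.map (T X Y g) = g) := by
      refine ⟨fun X Y g => F.preimage g, ?_, ?_, ?_⟩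
      · intro X' X Y Y' f g h
        apply hFaith.map_injective
        simp [F.map_preimage]
      · intro X Y f
        apply hFaith.map_injective
        simp [F.map_preimage]
      · intro X Y g
        simp [F.map_preimage]
    obtain ⟨T, h1, h2, h3⟩ := key
    exact ⟨⟨T, h1, h2⟩, ⟨T, h1, h3⟩⟩
  · rintro ⟨⟨T, hT1, hT2⟩, ⟨P, hP1, hP2⟩⟩
    refine ⟨⟨fun {X Y} g => ⟨P X Y g, hP2 X Y g⟩⟩, ⟨fun {X Y} f g h => ?_⟩⟩
    have := congrArg (T X Y) h
    rwa [hT2, hT2] at this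
end

section
/- Let R and S be rings and φ : R → S a ring homomorphism. The following are equivalent: (1) there exists an additive map E : S → R satisfying E(φ(r)·s) = r·E(s) and E(s·φ(r)) = E(s)·r for all r ∈ R, s ∈ S, and φ(E(s)) = s for all s ∈ S; (2) there exists an idempotent e ∈ R lying in the center of R such that φ is surjective and, for every r ∈ R, φ(r) = 0 if and only if r·e = 0 (so that φ induces a ring isomorphism Re ≅ S and φ is identified with the projection r ↦ r·e). -/
theorem ringHom_bimodule_section_iff_central_idempotent
    {R S : Type*} [Ring R] [Ring S] (φ : R →+* S) :
    (∃ E : S →+ R, (∀ (r : R) (s : S), E (φ r * s) = r * E s) ∧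
        (∀ (s : S) (r : R), E (s * φ r) = E s * r) ∧
        (∀ s : S, φ (E s) = s)) ↔
    (∃ e : R, e * e = e ∧ (∀ r : R, r * e = e * r) ∧
        Function.Surjective φ ∧ (∀ r : R, φ r = 0 ↔ r * e = 0)) := by
  constructor
  · rintro ⟨E, hl, hr, hs⟩
    refine ⟨E 1, ?_, ?_, fun s => ⟨E s, hs s⟩, ?_⟩
    · have h := hl (E 1) 1
      rw [hs 1, one_mul] at h
      exact h.symm
    · intro r
      have h1 : r * E 1 = E (φ r * 1) := (hl r 1).symm
      have h2 : E (1 * φ r) = E 1 * r := hr 1 r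
      rw [mul_one] at h1; rw [one_mul] at h2
      rw [h1, h2]
    · intro r
      constructor
      · intro h
        have h1 : E (φ r) = r * E 1 := by
          have := hl r 1; rwa [mul_one] at this
        rw [← h1, h, map_zero]
      · intro h
        have : φ (r * E 1) = φ r := by
          rw [map_mul, hs 1, mul_one]
        rw [← this, h, map_zero]
  · rintro ⟨e, he, hc, hsurj, hker⟩
    have key : ∀ a b : R, φ a = φ b → a * e = b * e := by
      intro a b hab
      have : (a - b) * e = 0 := (hker _).1 (by rw [map_sub, hab, sub_self])
      rw [sub_mul, sub_eq_zero] at this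
      exact this
    have hphie : φ e = 1 := by
      have : (1 - e) * e = 0 := by rw [sub_mul, one_mul, he, sub_self]
      have h0 := (hker _).2 this
      rw [map_sub, map_one, sub_eq_zero] at h0
      exact h0.symm
    have hinv : ∀ s : S, φ (Function.surjInv hsurj s) = s :=
      Function.surjInv_eq hsurj
    refine ⟨{ toFun := fun s => Function.surjInv hsurj s * e,
              map_zero' := ?_, map_add' := ?_ }, ?_, ?_, ?_⟩
    · have := key (Function.surjInv hsurj 0) 0 (by rw [hinv, map_zero])
      show Function.surjInv hsurj 0 * e = 0
      rw [this, zero_mul]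
    · intro s t
      have := key (Function.surjInv hsurj (s + t))
        (Function.surjInv hsurj s + Function.surjInv hsurj t)
        (by rw [hinv, map_add, hinv, hinv])
      show Function.surjInv hsurj (s + t) * e = _ * e + _ * e
      rw [this, add_mul]
    · intro r s
      have := key (Function.surjInv hsurj (φ r * s)) (r * Function.surjInv hsurj s)
        (by rw [hinv, map_mul, hinv])
      simp only [AddMonoidHom.coe_mk, ZeroHom.coe_mk]
      rw [this, mul_assoc]
    · intro s r
      have := key (Function.surjInv hsurj (s * φ r)) (Function.surjInv hsurj s * r)
        (by rw [hinv, map_mul, hinv])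
      simp only [AddMonoidHom.coe_mk, ZeroHom.coe_mk]
      rw [this, mul_assoc, hc r, ← mul_assoc]
    · intro s
      simp only [AddMonoidHom.coe_mk, ZeroHom.coe_mk]
      rw [map_mul, hphie, mul_one, hinv]
end

section
/- Let R be a commutative ring, S an R-algebra, M a left S-module, and χ : R → End_S(M) the canonical ring homomorphism sending r to scalar multiplication by r. The following are equivalent: (1) there exists an R-linear map E : End_S(M) → R such that χ(E(g)) = g for all g ∈ End_S(M); (2) there exists an idempotent e ∈ R such that χ is surjective and, for every r ∈ R, χ(r) = 0 if and only if r·e = 0 (so that χ induces a ring isomorphism Re ≅ End_S(M) and χ is identified with the projection r ↦ r·e). -/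
variable (R S M : Type*) [CommRing R] [Ring S] [Algebra R S]
  [AddCommGroup M] [Module S M] [Module R M] [IsScalarTower R S M] [SMulCommClass R S M]

instance : SMulCommClass S R M := SMulCommClass.symm R S M

/-! The map `χ` is the structure map `algebraMap R A` of the `R`-algebra `A = End_S(M)`, and the
argument works for any `R`-algebra `A`. A section `E` is determined on scalars by `e := E 1`,
since `E (algebraMap R A r) = r * e`; applying `algebraMap` to this shows that `e` is idempotent
and that `algebraMap R A` is identified with `r ↦ r * e`. Conversely, `r ↦ r * e` vanishes on the
kernel of the surjection `algebraMap R A`, so it factors through it, and the factored map is a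
section because `algebraMap R A e = 1`. -/

section LinearSection

variable {R A : Type*} [CommSemiring R] [Semiring A] [Algebra R A]

theorem LinearMap.map_algebraMap (E : A →ₗ[R] R) (r : R) :
    E (algebraMap R A r) = r * E 1 := by
  rw [Algebra.algebraMap_eq_smul_one, map_smul, smul_eq_mul]

variable {E : A →ₗ[R] R} (hE : ∀ a, algebraMap R A (E a) = a)
include hE

theorem isIdempotentElem_map_one_of_section : IsIdempotentElem (E 1) := by
  rw [IsIdempotentElem, ← E.map_algebraMap, hE]

theorem algebraMap_eq_zero_iff_mul_map_one_of_section (r : R) :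
    algebraMap R A r = 0 ↔ r * E 1 = 0 := by
  refine ⟨fun hr => ?_, fun hr => ?_⟩
  · rw [← E.map_algebraMap, hr, map_zero]
  · rw [← mul_one (algebraMap R A r), ← hE 1, ← map_mul, hr, map_zero]

end LinearSection

theorem exists_linearMap_section_of_isIdempotentElem {R A : Type*} [CommRing R] [Ring A]
    [Algebra R A] {e : R} (he : IsIdempotentElem e)
    (hsurj : Function.Surjective (algebraMap R A))
    (hker : ∀ r, algebraMap R A r = 0 ↔ r * e = 0) :
    ∃ E : A →ₗ[R] R, ∀ a, algebraMap R A (E a) = a := by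
  have hsurj' : Function.Surjective (Algebra.linearMap R A) := hsurj
  have hle : LinearMap.ker (Algebra.linearMap R A) ≤ LinearMap.ker (LinearMap.mulRight R e) :=
    fun r hr => (hker r).mp hr
  have he_one : algebraMap R A e = 1 := by
    rw [← sub_eq_zero, ← map_one (algebraMap R A), ← map_sub, hker, sub_mul, one_mul, he.eq,
      sub_self]
  refine ⟨(LinearMap.ker _).liftQ _ hle ∘ₗ
    ((Algebra.linearMap R A).quotKerEquivOfSurjective hsurj').symm.toLinearMap, fun a => ?_⟩
  obtain ⟨r, rfl⟩ := hsurj' a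
  rw [LinearMap.comp_apply, LinearEquiv.coe_coe, LinearMap.quotKerEquivOfSurjective_symm_apply,
    Submodule.liftQ_apply, LinearMap.mulRight_apply, map_mul, he_one, mul_one,
    Algebra.linearMap_apply]

theorem exists_linearMap_section_iff_isIdempotentElem {R A : Type*} [CommRing R] [Ring A]
    [Algebra R A] :
    (∃ E : A →ₗ[R] R, ∀ a, algebraMap R A (E a) = a) ↔
      ∃ e : R, IsIdempotentElem e ∧ Function.Surjective (algebraMap R A) ∧
        ∀ r, algebraMap R A r = 0 ↔ r * e = 0 := by
  constructor
  · rintro ⟨E, hE⟩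
    exact ⟨E 1, isIdempotentElem_map_one_of_section hE, fun a => ⟨E a, hE a⟩,
      algebraMap_eq_zero_iff_mul_map_one_of_section hE⟩
  · rintro ⟨e, he, hsurj, hker⟩
    exact exists_linearMap_section_of_isIdempotentElem he hsurj hker

/-- For the canonical ring homomorphism `χ : R →+* End_S(M)`, having an `R`-linear section is
equivalent to the existence of an idempotent `e ∈ R` such that `χ` is surjective with kernel
the annihilator of `e`, i.e. `χ` is identified with the projection `R → Re`. -/
theorem end_section_iff_idempotent :
    (∃ E : Module.End S M →ₗ[R] R,
        ∀ g : Module.End S M, Module.toModuleEnd S M (E g) = g) ↔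
    (∃ e : R, e * e = e ∧ Function.Surjective (Module.toModuleEnd S M (S := R)) ∧
        ∀ r : R, Module.toModuleEnd S M r = 0 ↔ r * e = 0) :=
  exists_linearMap_section_iff_isIdempotentElem
end

section
/- Let R be a commutative ring, S an R-algebra, and M a left S-module. Suppose m_1, …, m_n ∈ M and f_1, …, f_n ∈ Hom_S(M, S) satisfy: (i) Σ_{i=1}^n (s • m_i) ⊗ f_i = Σ_{i=1}^n m_i ⊗ (f_i · s) in M ⊗_R Hom_S(M, S) for every s ∈ S, where (f_i · s)(x) = f_i(x)·s; and (ii) for every m ∈ M, m ⊗ id_M = Σ_{i=1}^n m_i ⊗ (x ↦ f_i(x) • m) in M ⊗_R Hom_S(M, M). Then e := Σ_{i=1}^n f_i(m_i) is a central idempotent of S, e • m = m for every m ∈ M (hence s • m = (s·e) • m for all s ∈ S, m ∈ M), and the trace ideal Σ_{f ∈ Hom_S(M,S)} range(f) equals the ideal S·e. -/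
open TensorProduct

variable {R S M : Type*} [CommRing R] [Ring S] [Algebra R S]
  [AddCommGroup M] [Module S M] [Module R M] [IsScalarTower R S M] [SMulCommClass R S M]

instance : SMulCommClass S R S := SMulCommClass.symm R S S

/-- For an `S`-linear map `f : M →ₗ[S] S` and an element `q` of an `S`-module `Q`,
the `S`-linear map `x ↦ f x • q`.  For `Q = S` this is the map `x ↦ f x * s`. -/
def smulApply {Q : Type*} [AddCommGroup Q] [Module S Q] (f : M →ₗ[S] S) (q : Q) :
    M →ₗ[S] Q where
  toFun x := f x • q
  map_add' x y := by simp [add_smul]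
  map_smul' s x := by simp [smul_eq_mul, mul_smul]

/-- Evaluation map `M ⊗[R] Hom_S(M, Q) → Q`, `x ⊗ g ↦ g x`. -/
noncomputable def evalT {Q : Type*} [AddCommGroup Q] [Module S Q] [Module R Q]
    [IsScalarTower R S Q] [SMulCommClass S R Q] :
    M ⊗[R] (M →ₗ[S] Q) →ₗ[R] Q :=
  TensorProduct.lift (LinearMap.mk₂ R (fun x g => g x)
    (fun x y g => g.map_add x y)
    (fun r x g => g.map_smul_of_tower r x)
    (fun g g' x => rfl)
    (fun r g x => rfl))

@[simp] lemma evalT_tmul {Q : Type*} [AddCommGroup Q] [Module S Q] [Module R Q]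
    [IsScalarTower R S Q] [SMulCommClass S R Q] (x : M) (g : M →ₗ[S] Q) :
    evalT (R := R) (x ⊗ₜ[R] g) = g x := rfl

theorem central_idempotent_of_coinduction_data (n : ℕ) (m : Fin n → M)
    (f : Fin n → (M →ₗ[S] S))
    (h1 : ∀ s : S, (∑ i, (s • m i) ⊗ₜ[R] f i : M ⊗[R] (M →ₗ[S] S)) =
      ∑ i, m i ⊗ₜ[R] smulApply (f i) s)
    (h2 : ∀ x : M,
      (x ⊗ₜ[R] (LinearMap.id : M →ₗ[S] M) : M ⊗[R] (M →ₗ[S] M)) =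
        ∑ i, m i ⊗ₜ[R] smulApply (f i) x) :
    (∑ i, f i (m i)) * (∑ i, f i (m i)) = ∑ i, f i (m i) ∧
    (∀ s : S, s * (∑ i, f i (m i)) = (∑ i, f i (m i)) * s) ∧
    (∀ x : M, (∑ i, f i (m i)) • x = x) ∧
    (∀ (s : S) (x : M), s • x = (s * ∑ i, f i (m i)) • x) ∧
    (⨆ g : M →ₗ[S] S, LinearMap.range g) = Submodule.span S {∑ i, f i (m i)} := by
  set e : S := ∑ i, f i (m i) with he
  -- apply evaluation to h2
  have hfix : ∀ x : M, e • x = x := by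
    intro x
    have := congrArg (evalT (R := R)) (h2 x)
    simp only [map_sum, evalT_tmul] at this
    simp only [smulApply, LinearMap.coe_mk, AddHom.coe_mk, LinearMap.id_apply] at this
    rw [he, Finset.sum_smul]
    exact this.symm
  -- apply evaluation to h1
  have hcomm : ∀ s : S, s * e = e * s := by
    intro s
    have := congrArg (evalT (R := R)) (h1 s)
    simp only [map_sum, evalT_tmul] at this
    simp only [smulApply, LinearMap.coe_mk, AddHom.coe_mk, map_smul, smul_eq_mul] at this
    rw [he, Finset.mul_sum, Finset.sum_mul]
    exact this
  have hidem : e * e = e := by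
    conv_lhs => rw [he, Finset.sum_mul]
    rw [he]
    refine Finset.sum_congr rfl fun i _ => ?_
    calc f i (m i) * e = e * f i (m i) := hcomm _
    _ = f i (e • m i) := by rw [map_smul, smul_eq_mul]
    _ = f i (m i) := by rw [hfix]
  refine ⟨hidem, hcomm, hfix, fun s x => by rw [mul_smul, hfix], ?_⟩
  apply le_antisymm
  · refine iSup_le fun g => ?_
    rintro _ ⟨x, rfl⟩
    have : g x = g x * e := by
      conv_lhs => rw [← hfix x, map_smul, smul_eq_mul, ← hcomm]
    rw [this]
    exact Submodule.mem_span_singleton.2 ⟨g x, rfl⟩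
  · rw [Submodule.span_le, Set.singleton_subset_iff, he]
    exact Submodule.sum_mem _ fun i _ =>
      Submodule.mem_iSup_of_mem (f i) ⟨m i, rfl⟩
end
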